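/- Let N ≥ 1, 1 ≤ p < ∞, let H ⊂ ℝ^N be a closed halfspace, and let (u_n)_{n∈ℕ} be a sequence of nonnegative functions in L^p(ℝ^N) converging in L^p(ℝ^N) to a nonnegative function u ∈ L^p(ℝ^N). Then u_n^H ∈ L^p(ℝ^N) for each n, u^H ∈ L^p(ℝ^N), and u_n^H → u^H in L^p(ℝ^N). -/

import Mathlib

open MeasureTheory Filter

noncomputable def reflectH {N : ℕ} (a : EuclideanSpace ℝ (Fin N)) (b : ℝ)
    (x : EuclideanSpace ℝ (Fin N)) : EuclideanSpace ℝ (Fin N) :=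
  x - (2 * ((inner ℝ a x : ℝ) - b)) • a

noncomputable def polarization {N : ℕ} (a : EuclideanSpace ℝ (Fin N)) (b : ℝ)
    (u : EuclideanSpace ℝ (Fin N) → ℝ) (x : EuclideanSpace ℝ (Fin N)) : ℝ :=
  if (inner ℝ a x : ℝ) ≤ b then max (u x) (u (reflectH a b x))
  else min (u x) (u (reflectH a b x))

/-!
Polarization is pointwise `1`-Lipschitz in the pair `(u(x), u(σ_H x))`: since `max` and `min`
are `1`-Lipschitz for the sup norm, `|u^H - v^H| ≤ max (|u - v|, |u - v| ∘ σ_H)`. Raising to the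
power `p` and bounding the max by the sum, `∫ |u^H - v^H|^p ≤ 2 ∫ |u - v|^p`, because `σ_H`
preserves Lebesgue measure. The same pointwise bound with `v = 0` gives `u^H ∈ L^p`.
-/

namespace Polarization

variable {N : ℕ} {a : EuclideanSpace ℝ (Fin N)} {b : ℝ}

local notation "E" => EuclideanSpace ℝ (Fin N)

lemma reflectH_eq_add_reflection (ha : ‖a‖ = 1) :
    reflectH a b = fun x : E => (ℝ ∙ a)ᗮ.reflection x + (2 * b) • a := by
  funext x
  rw [Submodule.reflection_orthogonal_apply, Submodule.reflection_singleton_apply]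
  simp only [reflectH, ha]
  module

lemma measurePreserving_reflectH (ha : ‖a‖ = 1) :
    MeasurePreserving (reflectH a b) (volume : Measure E) volume := by
  rw [reflectH_eq_add_reflection ha]
  exact (measurePreserving_add_right volume _).comp (ℝ ∙ a)ᗮ.reflection.measurePreserving

lemma measurableEmbedding_reflectH (ha : ‖a‖ = 1) :
    MeasurableEmbedding (reflectH a b : E → E) := by
  rw [reflectH_eq_add_reflection ha]
  exact (Homeomorph.addRight _).measurableEmbedding.comp
    (ℝ ∙ a)ᗮ.reflection.toHomeomorph.measurableEmbedding

lemma integral_comp_reflectH (ha : ‖a‖ = 1) (f : E → ℝ) :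
    ∫ x, f (reflectH a b x) = ∫ x, f x :=
  (measurePreserving_reflectH ha).integral_comp (measurableEmbedding_reflectH ha) f

lemma polarization_eq_piecewise (u : E → ℝ) :
    polarization a b u = {x | inner ℝ a x ≤ b}.piecewise
      (fun x => max (u x) (u (reflectH a b x))) (fun x => min (u x) (u (reflectH a b x))) := by
  funext x
  rfl

lemma aestronglyMeasurable_polarization (ha : ‖a‖ = 1) {u : E → ℝ}
    (hu : AEStronglyMeasurable u volume) :
    AEStronglyMeasurable (polarization a b u) volume := by
  have hσ := hu.comp_measurePreserving (measurePreserving_reflectH (b := b) ha)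
  rw [polarization_eq_piecewise]
  exact .piecewise (measurableSet_le (by fun_prop) measurable_const) (hu.sup hσ).restrict
    (hu.inf hσ).restrict

lemma abs_polarization_sub_le (u v : E → ℝ) (x : E) :
    |polarization a b u x - polarization a b v x| ≤
      max |u x - v x| |u (reflectH a b x) - v (reflectH a b x)| := by
  unfold polarization
  split_ifs
  · exact abs_max_sub_max_le_max _ _ _ _
  · exact abs_min_sub_min_le_max _ _ _ _

lemma memLp_polarization (ha : ‖a‖ = 1) {q : ENNReal} {u : E → ℝ} (hu : MemLp u q volume) :
    MemLp (polarization a b u) q volume := by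
  have hσ := hu.comp_measurePreserving (measurePreserving_reflectH (b := b) ha)
  refine .of_le (hu.norm.add hσ.norm) (aestronglyMeasurable_polarization ha hu.1)
    (ae_of_all _ fun x => ?_)
  have h := abs_polarization_sub_le (a := a) (b := b) u 0 x
  simp only [polarization, Pi.zero_apply, max_self, min_self, ite_self, sub_zero] at h
  simp only [Real.norm_eq_abs, Pi.add_apply, Function.comp_apply]
  exact h.trans ((max_le_add_of_nonneg (abs_nonneg _) (abs_nonneg _)).trans (le_abs_self _))

lemma rpow_abs_polarization_sub_le {p : ℝ} (hp : 0 ≤ p) (u v : E → ℝ) (x : E) :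
    |polarization a b u x - polarization a b v x| ^ p ≤
      |u x - v x| ^ p + |u (reflectH a b x) - v (reflectH a b x)| ^ p := by
  calc |polarization a b u x - polarization a b v x| ^ p
      ≤ (max |u x - v x| |u (reflectH a b x) - v (reflectH a b x)|) ^ p := by
        gcongr; exact abs_polarization_sub_le u v x
    _ = max (|u x - v x| ^ p) (|u (reflectH a b x) - v (reflectH a b x)| ^ p) :=
        (Real.monotoneOn_rpow_Ici_of_exponent_nonneg hp).map_max (abs_nonneg (u x - v x))
          (abs_nonneg (u (reflectH a b x) - v (reflectH a b x)))
    _ ≤ _ := max_le_add_of_nonneg (by positivity) (by positivity)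

lemma integral_rpow_abs_polarization_sub_le (ha : ‖a‖ = 1) {p : ℝ} (hp : 0 < p) {u v : E → ℝ}
    (hu : MemLp u (ENNReal.ofReal p) volume) (hv : MemLp v (ENNReal.ofReal p) volume) :
    ∫ x, |polarization a b u x - polarization a b v x| ^ p ≤ 2 * ∫ x, |u x - v x| ^ p := by
  set g : E → ℝ := fun x => |u x - v x| ^ p
  have hg : Integrable g := by
    simpa [g, Real.norm_eq_abs, ENNReal.toReal_ofReal hp.le] using
      (hu.sub hv).integrable_norm_rpow (by simpa using hp) ENNReal.ofReal_ne_top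
  have hgσ : Integrable (fun x => g (reflectH a b x)) :=
    (measurePreserving_reflectH ha).integrable_comp_of_integrable hg
  calc ∫ x, |polarization a b u x - polarization a b v x| ^ p
      ≤ ∫ x, (g x + g (reflectH a b x)) :=
        integral_mono_of_nonneg (ae_of_all _ fun _ => by positivity) (hg.add hgσ)
          (ae_of_all _ (rpow_abs_polarization_sub_le hp.le u v))
    _ = 2 * ∫ x, g x := by
        rw [integral_add hg hgσ, integral_comp_reflectH ha g]
        ring

end Polarization

open Polarization in
theorem statement14_general {N : ℕ} (p : ℝ) (hp : 1 ≤ p)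
    (a : EuclideanSpace ℝ (Fin N)) (b : ℝ) (ha : ‖a‖ = 1)
    (useq : ℕ → EuclideanSpace ℝ (Fin N) → ℝ) (u : EuclideanSpace ℝ (Fin N) → ℝ)
    (hseq : ∀ n, MemLp (useq n) (ENNReal.ofReal p) volume)
    (hu : MemLp u (ENNReal.ofReal p) volume)
    (hconv : Filter.Tendsto (fun n => ∫ x, |useq n x - u x| ^ p) atTop (nhds 0)) :
    (∀ n, MemLp (polarization a b (useq n)) (ENNReal.ofReal p) volume) ∧
      MemLp (polarization a b u) (ENNReal.ofReal p) volume ∧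
        Filter.Tendsto (fun n => ∫ x, |polarization a b (useq n) x - polarization a b u x| ^ p)
          atTop (nhds 0) := by
  refine ⟨fun n => memLp_polarization ha (hseq n), memLp_polarization ha hu, ?_⟩
  refine squeeze_zero (fun n => integral_nonneg fun x => by positivity)
    (fun n => integral_rpow_abs_polarization_sub_le ha (by linarith) (hseq n) hu) ?_
  simpa using hconv.const_mul 2

/-- Polarization is continuous on the nonnegative functions of `L^p(ℝ^N)`:
if nonnegative `u_n ∈ L^p` converge to a nonnegative `u ∈ L^p` in `L^p`, then
`u_n^H, u^H ∈ L^p` and `u_n^H → u^H` in `L^p`. -/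
theorem statement14 {N : ℕ} (hN : 1 ≤ N) (p : ℝ) (hp : 1 ≤ p)
    (a : EuclideanSpace ℝ (Fin N)) (b : ℝ) (ha : ‖a‖ = 1)
    (useq : ℕ → EuclideanSpace ℝ (Fin N) → ℝ) (u : EuclideanSpace ℝ (Fin N) → ℝ)
    (hseq : ∀ n, MemLp (useq n) (ENNReal.ofReal p) volume)
    (hseq0 : ∀ n x, 0 ≤ useq n x)
    (hu : MemLp u (ENNReal.ofReal p) volume) (hu0 : ∀ x, 0 ≤ u x)
    (hconv : Filter.Tendsto (fun n => ∫ x, |useq n x - u x| ^ p) atTop (nhds 0)) :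
    (∀ n, MemLp (polarization a b (useq n)) (ENNReal.ofReal p) volume) ∧
      MemLp (polarization a b u) (ENNReal.ofReal p) volume ∧
        Filter.Tendsto (fun n => ∫ x, |polarization a b (useq n) x - polarization a b u x| ^ p)
          atTop (nhds 0) :=
  statement14_general p hp a b ha useq u hseq hu hconv
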